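/- arXiv:2503.23423 — 9 statements merged into one kernel-verified Lean document; each statement's English description precedes it below -/
import Mathlib

section
/- If φ₁ and φ₂ are right-continuous comparison functions, then φ := max{φ₁, φ₂} is also a right-continuous comparison function; in particular lim_{n→∞} φⁿ(t) = 0 for all t > 0. -/
open Filter Topology Set

noncomputable section

/-- A semi-metric: symmetric, vanishing exactly on the diagonal (no triangle inequality). -/
def IsSemiMetric {X : Type*} (d : X → X → NNReal) : Prop :=
  (∀ x y, d x y = d y x) ∧ ∀ x y, d x y = 0 ↔ x = y

/-- Ball of radius `r` around `x`. -/
def SMBall {X : Type*} (d : X → X → NNReal) (x : X) (r : NNReal) : Set X := {y | d x y < r}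

/-- The basic triangle function `Φ_d(u,v) = sup{d(x,y) : ∃ z, d(x,z) ≤ u, d(y,z) ≤ v}`. -/
def SMPhi {X : Type*} (d : X → X → NNReal) (u v : NNReal) : ENNReal :=
  ⨆ (p : X × X) (_ : ∃ z : X, d p.1 z ≤ u ∧ d p.2 z ≤ v), (d p.1 p.2 : ENNReal)

/-- Normal property: the basic triangle function is finite-valued. -/
def SMNormal {X : Type*} (d : X → X → NNReal) : Prop := ∀ u v : NNReal, SMPhi d u v < ⊤

/-- Regular property: the basic triangle function is continuous at `(0,0)`. -/
def SMRegular {X : Type*} (d : X → X → NNReal) : Prop :=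
  ∀ ε : NNReal, 0 < ε → ∃ δ : NNReal, 0 < δ ∧
    ∀ u v : NNReal, u ≤ δ → v ≤ δ → SMPhi d u v < (ε : ENNReal)

/-- Cauchy sequence with respect to a semi- or pre-metric. -/
def SMCauchy {X : Type*} (d : X → X → NNReal) (x : ℕ → X) : Prop :=
  ∀ ε : NNReal, 0 < ε → ∃ N : ℕ, ∀ m ≥ N, ∀ n ≥ N, d (x m) (x n) < ε

/-- Completeness: every Cauchy sequence converges. -/
def SMComplete {X : Type*} (d : X → X → NNReal) : Prop :=
  ∀ x : ℕ → X, SMCauchy d x → ∃ l : X, Tendsto (fun n => d (x n) l) atTop (𝓝 0)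

/-- Boundedness: contained in some ball. -/
def SMBounded {X : Type*} (d : X → X → NNReal) (H : Set X) : Prop :=
  ∃ (x₀ : X) (r : NNReal), H ⊆ SMBall d x₀ r

/-- Comparison function: increasing, with iterates tending to zero on `(0,∞)`. -/
def SMComparison (φ : NNReal → NNReal) : Prop :=
  Monotone φ ∧ ∀ t : NNReal, 0 < t → Tendsto (fun n => φ^[n] t) atTop (𝓝 0)

/-- Right-continuity of a function `[0,∞) → [0,∞)`. -/
def SMRightCont (φ : NNReal → NNReal) : Prop :=
  ∀ t : NNReal, ContinuousWithinAt φ (Ici t) t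

/-- Diameter of a set. -/
def SMdiam {X : Type*} (d : X → X → NNReal) (H : Set X) : ENNReal :=
  ⨆ (x ∈ H) (y ∈ H), (d x y : ENNReal)

/-- `r`-neighborhood of a set. -/
def SMnbhd {X : Type*} (d : X → X → NNReal) (A : Set X) (r : NNReal) : Set X :=
  ⋃ x ∈ A, SMBall d x r

/-- Kuratowski measure of non-compactness. -/
def SMchi {X : Type*} (d : X → X → NNReal) (H : Set X) : ENNReal :=
  sInf {c : ENNReal | ∃ r : NNReal, c = (r : ENNReal) ∧ 0 < r ∧
    ∃ s : Finset X, H ⊆ ⋃ x ∈ s, SMBall d x r}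

/-- Hausdorff-Pompeiu distance between subsets. -/
def SMdHP {X : Type*} (d : X → X → NNReal) (A B : Set X) : ENNReal :=
  sInf {c : ENNReal | ∃ r : NNReal, c = (r : ENNReal) ∧ 0 < r ∧
    A ⊆ SMnbhd d B r ∧ B ⊆ SMnbhd d A r}

/-- Open sets of the semi-metric topology. -/
def SMOpen {X : Type*} (d : X → X → NNReal) (U : Set X) : Prop :=
  ∀ x ∈ U, ∃ r : NNReal, 0 < r ∧ SMBall d x r ⊆ U

/-- Closed sets of the semi-metric topology. -/
def SMClosed {X : Type*} (d : X → X → NNReal) (A : Set X) : Prop := SMOpen d Aᶜ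

/-- Max semi-metric on `X^q`. -/
def SMmax {X : Type*} (q : ℕ) (d : X → X → NNReal) (x y : Fin q → X) : NNReal :=
  Finset.univ.sup fun i => d (x i) (y i)

/-! A comparison function satisfies `φ t < t` for `t > 0`, and this property passes to the
maximum. For a right-continuous `φ` with `φ t < t` (hence also `φ 0 = 0`), every orbit is
nonincreasing, so it converges from above to its infimum `L`; right-continuity makes `L` a fixed
point, forcing `L = 0`. -/

theorem SMComparison.apply_lt_self {φ : NNReal → NNReal} (hφ : SMComparison φ) {t : NNReal}
    (ht : 0 < t) : φ t < t := by
  by_contra! h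
  have hge : ∀ n, t ≤ φ^[n] t := fun n =>
    hφ.1.monotone_iterate_of_le_map h (Nat.zero_le n)
  obtain ⟨n, hn⟩ := ((hφ.2 t ht).eventually (gt_mem_nhds ht)).exists
  exact (hge n).not_gt hn

namespace SMRightCont

variable {φ : NNReal → NNReal}

theorem apply_zero_eq_zero (hφ : SMRightCont φ) (hlt : ∀ t, 0 < t → φ t < t) : φ 0 = 0 := by
  have hφ0 : Tendsto φ (𝓝[>] 0) (𝓝 (φ 0)) :=
    (hφ 0).tendsto.mono_left (nhdsWithin_mono _ Ioi_subset_Ici_self)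
  exact nonpos_iff_eq_zero.1 <| le_of_tendsto_of_tendsto hφ0
    (tendsto_nhdsWithin_of_tendsto_nhds tendsto_id)
    (eventually_nhdsWithin_of_forall fun s hs => (hlt s hs).le)

theorem tendsto_iterate_zero (hφ : SMRightCont φ) (hlt : ∀ t, 0 < t → φ t < t) (t : NNReal) :
    Tendsto (fun n => φ^[n] t) atTop (𝓝 0) := by
  have hle : φ ≤ id := fun s => by
    rcases eq_zero_or_pos s with rfl | hs
    · exact (apply_zero_eq_zero hφ hlt).le
    · exact (hlt s hs).le
  have hanti : Antitone fun n => φ^[n] t := fun m n hmn =>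
    Function.antitone_iterate_of_le_id hle hmn t
  set L := ⨅ n, φ^[n] t
  have hL : Tendsto (fun n => φ^[n] t) atTop (𝓝 L) :=
    tendsto_atTop_ciInf hanti (OrderBot.bddBelow _)
  have hL' : Tendsto (fun n => φ^[n] t) atTop (𝓝[≥] L) :=
    tendsto_nhdsWithin_iff.2 ⟨hL, Eventually.of_forall fun n => ciInf_le' (fun k => φ^[k] t) n⟩
  have hfix : φ L = L := by
    refine tendsto_nhds_unique ?_ ((tendsto_add_atTop_iff_nat 1).2 hL)
    simp only [Function.iterate_succ_apply']
    exact (hφ L).tendsto.comp hL'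
  rcases eq_zero_or_pos L with hL0 | hL0
  · rwa [hL0] at hL
  · exact absurd hfix (hlt L hL0).ne

end SMRightCont

theorem SMComparison.of_rightCont {φ : NNReal → NNReal} (hmono : Monotone φ)
    (hφ : SMRightCont φ) (hlt : ∀ t, 0 < t → φ t < t) : SMComparison φ :=
  ⟨hmono, fun t _ => hφ.tendsto_iterate_zero hlt t⟩

theorem stmt1 (φ₁ φ₂ : NNReal → NNReal)
    (h1 : SMComparison φ₁) (h1r : SMRightCont φ₁)
    (h2 : SMComparison φ₂) (h2r : SMRightCont φ₂) :
    SMComparison (fun t => max (φ₁ t) (φ₂ t)) ∧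
      SMRightCont (fun t => max (φ₁ t) (φ₂ t)) ∧
      ∀ t : NNReal, 0 < t →
        Tendsto (fun n => (fun s => max (φ₁ s) (φ₂ s))^[n] t) atTop (𝓝 0) := by
  have hrc : SMRightCont fun t => max (φ₁ t) (φ₂ t) := fun t => (h1r t).max (h2r t)
  have hlt : ∀ t, 0 < t → max (φ₁ t) (φ₂ t) < t := fun t ht =>
    max_lt (h1.apply_lt_self ht) (h2.apply_lt_self ht)
  have hcomp := SMComparison.of_rightCont (h1.1.max h2.1) hrc hlt
  exact ⟨hcomp, hrc, hcomp.2⟩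
end
end

section
/- In a normal semi-metric space, every Cauchy sequence is bounded. -/
open Filter Topology Set

noncomputable section

theorem stmt3 {X : Type*} (d : X → X → NNReal) (hd : IsSemiMetric d) (hn : SMNormal d)
    (x : ℕ → X) (hx : SMCauchy d x) :
    SMBounded d (Set.range x) := by
  obtain ⟨N, hN⟩ := hx 1 one_pos
  refine ⟨x N, (Finset.range (N+1)).sup (fun n => d (x N) (x n)) + 1, ?_⟩
  rintro _ ⟨n, rfl⟩
  show d (x N) (x n) < _
  rcases le_or_gt N n with h | h
  · have h1 : d (x N) (x n) < 1 := hN N le_rfl n h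
    calc d (x N) (x n) < 1 := h1
      _ ≤ _ := le_add_self
  · have : d (x N) (x n) ≤ (Finset.range (N+1)).sup (fun n => d (x N) (x n)) :=
      Finset.le_sup (f := fun n => d (x N) (x n)) (Finset.mem_range.mpr (Nat.lt_succ_of_lt h))
    calc d (x N) (x n) ≤ _ := this
      _ < _ + 1 := lt_add_of_pos_right _ one_pos
end
end

section
/- In a normal semi-metric space, if H is a non-empty bounded subset and r > 0, then the r-neighborhood H(r) := ∪_{x∈H} B(x,r) is bounded. -/
open Filter Topology Set

noncomputable section

theorem stmt4 {X : Type*} (d : X → X → NNReal) (hd : IsSemiMetric d) (hn : SMNormal d)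
    (H : Set X) (hH : H.Nonempty) (hb : SMBounded d H) (r : NNReal) (hr : 0 < r) :
    SMBounded d (SMnbhd d H r) := by
  obtain ⟨x₀, R, hR⟩ := hb
  set M := (SMPhi d R r).toNNReal with hM
  refine ⟨x₀, M + 1, ?_⟩
  intro y hy
  simp only [SMnbhd, mem_iUnion] at hy
  obtain ⟨x, hx, hxy⟩ := hy
  have hle : (d x₀ y : ENNReal) ≤ SMPhi d R r := by
    refine le_trans ?_ (le_iSup _ (⟨x₀, y⟩ : X × X))
    exact le_iSup_iff.mpr fun b hb => hb ⟨x, le_of_lt (hR hx), by rw [hd.1]; exact hxy.le⟩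
  have hfin := hn R r
  have : d x₀ y ≤ M := by
    rw [hM]
    exact ENNReal.toNNReal_mono hfin.ne hle |>.trans_eq (by simp)
  exact lt_of_le_of_lt this (lt_add_of_pos_right M one_pos)
end
end

section
/- Let (X,d) be a symmetric pre-metric space (d(x,x)=0, d symmetric) that is regular and normal. If T : X → X is a φ-contraction for a comparison function φ, then for every x ∈ X the orbit (Tⁿx)ₙ is a Cauchy sequence and is bounded. -/
open Filter Topology Set

noncomputable section

theorem stmt7 {X : Type*} (d : X → X → NNReal)
    (hsymm : ∀ x y, d x y = d y x) (hrefl : ∀ x, d x x = 0)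
    (hreg : SMRegular d) (hnorm : SMNormal d)
    (φ : NNReal → NNReal) (hφ : SMComparison φ)
    (T : X → X) (hT : ∀ x y, d (T x) (T y) ≤ φ (d x y)) :
    ∀ x : X, SMCauchy d (fun n => T^[n] x) ∧
      SMBounded d (Set.range fun n => T^[n] x) := by
  intro x
  have hmono := hφ.1
  -- iterated contraction
  have hiter : ∀ (n : ℕ) (a b : X), d (T^[n] a) (T^[n] b) ≤ φ^[n] (d a b) := by
    intro n
    induction n with
    | zero => intro a b; simp
    | succ n ih =>
      intro a b
      rw [Function.iterate_succ_apply', Function.iterate_succ_apply',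
        Function.iterate_succ_apply' (f := φ)]
      exact le_trans (hT _ _) (hmono (ih a b))
  -- helper to put a distance below SMPhi
  have hPhiLe : ∀ (a b z : X) (u v : NNReal), d a z ≤ u → d b z ≤ v →
      (d a b : ENNReal) ≤ SMPhi d u v := by
    intro a b z u v h1 h2
    have : ((d a b : NNReal) : ENNReal) ≤
        ⨆ (_ : ∃ z : X, d a z ≤ u ∧ d b z ≤ v), ((d a b : NNReal) : ENNReal) :=
      le_iSup (fun _ : (∃ z : X, d a z ≤ u ∧ d b z ≤ v) =>
        ((d a b : NNReal) : ENNReal)) ⟨z, h1, h2⟩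
    exact le_trans this (le_iSup (fun p : X × X =>
      ⨆ (_ : ∃ z : X, d p.1 z ≤ u ∧ d p.2 z ≤ v), ((d p.1 p.2 : NNReal) : ENNReal))
      (⟨a, b⟩ : X × X))
  -- key claim
  have key : ∀ ε : NNReal, 0 < ε → ∃ N : ℕ, ∀ n, N ≤ n →
      d (T^[N] x) (T^[n] x) < ε := by
    intro ε hε
    obtain ⟨δ₀, hδ₀pos, hδ₀⟩ := hreg ε hε
    set δ : NNReal := min δ₀ (ε / 2) with hδdef
    have hδpos : 0 < δ := lt_min hδ₀pos (by positivity)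
    have hδlt : δ < ε := lt_of_le_of_lt (min_le_right _ _) (NNReal.half_lt_self hε.ne')
    obtain ⟨γ₀, hγ₀pos, hγ₀⟩ := hreg δ hδpos
    set γ : NNReal := min γ₀ δ with hγdef
    have hγpos : 0 < γ := lt_min hγ₀pos hδpos
    have hγδ : γ ≤ δ := min_le_right _ _
    have hγprop : ∀ u v : NNReal, u ≤ γ → v ≤ γ → SMPhi d u v < (δ : ENNReal) :=
      fun u v hu hv => hγ₀ u v (hu.trans (min_le_left _ _)) (hv.trans (min_le_left _ _))
    -- choose i ≥ 1 with φ^[i] ε < γ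
    obtain ⟨i, hi, hi1⟩ : ∃ i : ℕ, φ^[i] ε < γ ∧ 1 ≤ i := by
      have h := ((hφ.2 ε hε).eventually_lt_const hγpos).and (Filter.eventually_ge_atTop 1)
      exact h.exists
    -- bound for initial piece
    set β : NNReal := (Finset.range (i + 1)).sup (fun j => d x (T^[j] x)) + 1 with hβdef
    have hβpos : 0 < β := lt_of_lt_of_le zero_lt_one le_add_self
    obtain ⟨N, hN⟩ : ∃ N : ℕ, φ^[N] β < γ :=
      ((hφ.2 β hβpos).eventually_lt_const hγpos).exists
    refine ⟨N, ?_⟩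
    have hA : ∀ j, j ≤ i → d (T^[N] x) (T^[N + j] x) ≤ γ := by
      intro j hj
      have h1 : d (T^[N] x) (T^[N + j] x) ≤ φ^[N] (d x (T^[j] x)) := by
        have h := hiter N x (T^[j] x)
        rwa [← Function.iterate_add_apply] at h
      have h2 : d x (T^[j] x) ≤ β := by
        have hm : j ∈ Finset.range (i + 1) := Finset.mem_range.mpr (by omega)
        exact le_trans (Finset.le_sup (f := fun j => d x (T^[j] x)) hm) le_self_add
      exact le_trans h1 (le_trans (hmono.iterate N h2) hN.le)
    have hB : ∀ n : ℕ, d (T^[N] x) (T^[N + n] x) < ε := by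
      intro n
      induction n using Nat.strong_induction_on with
      | _ n ih =>
        by_cases hn : n ≤ i
        · exact lt_of_le_of_lt (le_trans (hA n hn) hγδ) hδlt
        · push_neg at hn
          have hIH := ih (n - i) (by omega)
          have hfar : d (T^[N + i] x) (T^[N + n] x) ≤ γ := by
            have h1 := hiter i (T^[N] x) (T^[N + (n - i)] x)
            have e1 : T^[i] (T^[N] x) = T^[N + i] x := by
              rw [← Function.iterate_add_apply, Nat.add_comm]
            have e2 : T^[i] (T^[N + (n - i)] x) = T^[N + n] x := by
              rw [← Function.iterate_add_apply]
              congr 1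
              omega
            rw [e1, e2] at h1
            exact le_trans h1 (le_trans (hmono.iterate i hIH.le) hi.le)
          have hnear : d (T^[N] x) (T^[N + i] x) ≤ γ := hA i le_rfl
          have hsym' : d (T^[N + n] x) (T^[N + i] x) ≤ γ := by
            rw [hsymm]; exact hfar
          have hle : (d (T^[N] x) (T^[N + n] x) : ENNReal) ≤ SMPhi d γ γ :=
            hPhiLe _ _ (T^[N + i] x) γ γ hnear hsym'
          have hlt : (d (T^[N] x) (T^[N + n] x) : ENNReal) < (δ : ENNReal) :=
            lt_of_le_of_lt hle (hγprop γ γ le_rfl le_rfl)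
          exact lt_trans (ENNReal.coe_lt_coe.mp hlt) hδlt
    intro n hn
    obtain ⟨m, rfl⟩ := Nat.exists_eq_add_of_le hn
    exact hB m
  constructor
  · -- Cauchy
    intro ε hε
    obtain ⟨δ, hδpos, hδprop⟩ := hreg ε hε
    obtain ⟨N, hN⟩ := key δ hδpos
    refine ⟨N, ?_⟩
    intro m hm n hn
    have h1 : d (T^[m] x) (T^[N] x) ≤ δ := by rw [hsymm]; exact (hN m hm).le
    have h2 : d (T^[n] x) (T^[N] x) ≤ δ := by rw [hsymm]; exact (hN n hn).le
    have hle : (d (T^[m] x) (T^[n] x) : ENNReal) ≤ SMPhi d δ δ :=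
      hPhiLe _ _ (T^[N] x) δ δ h1 h2
    exact ENNReal.coe_lt_coe.mp (lt_of_le_of_lt hle (hδprop δ δ le_rfl le_rfl))
  · -- Bounded
    obtain ⟨N, hN⟩ := key 1 zero_lt_one
    refine ⟨T^[N] x, (Finset.range (N + 1)).sup (fun k => d (T^[N] x) (T^[k] x)) + 1, ?_⟩
    rintro y ⟨n, rfl⟩
    show d (T^[N] x) (T^[n] x) < _
    by_cases hn : n ≤ N
    · have hm : n ∈ Finset.range (N + 1) := Finset.mem_range.mpr (by omega)
      exact lt_of_le_of_lt (Finset.le_sup (f := fun k => d (T^[N] x) (T^[k] x)) hm)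
        (lt_add_of_pos_right _ zero_lt_one)
    · exact lt_of_lt_of_le (hN n (by omega)) le_add_self
end
end

section
/- Let (X,d) be a normal, regular semi-metric space and let F(X) be the set of non-empty bounded subsets of X. Then the Hausdorff-Pompeiu distance d_HP(A,B) := inf{r > 0 : A ⊆ B(r) and B ⊆ A(r)} is a finite-valued symmetric pre-metric on F(X), and (F(X), d_HP) is itself normal and regular, with Φ_{d_HP}(u,v) ≤ Φ_d(u+ε, v+ε) for all u,v ≥ 0 and ε > 0. -/
open Filter Topology Set

noncomputable section

/-- The set of non-empty bounded subsets of `X`. -/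
def SMF {X : Type*} (d : X → X → NNReal) : Type _ :=
  {A : Set X // A.Nonempty ∧ SMBounded d A}

/-- The Hausdorff-Pompeiu distance as an `NNReal`-valued map on non-empty bounded sets. -/
def SMdHPn {X : Type*} (d : X → X → NNReal) (A B : SMF d) : NNReal :=
  (SMdHP d A.1 B.1).toNNReal

/-! If every point of `A` lies within `s` of `C` and every point of `C` within `t` of `B`, then
every point of `A` lies within `Φ_d(s,t)` of `B`. Hence `d_HP(A,B) ≤ Φ_d(u+ε, v+ε)` whenever
`d_HP(A,C) ≤ u` and `d_HP(B,C) ≤ v`, so `Φ_{d_HP}` is dominated by a shift of `Φ_d` and inherits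
finiteness and continuity at `(0,0)`. That `d_HP` is finite on bounded sets is again normality:
two points of bounded sets are linked through the two centres by two applications of `Φ_d`. -/

section SemiMetric

variable {X : Type*} (d : X → X → NNReal)

lemma le_SMPhi {x y z : X} {u v : NNReal} (hxz : d x z ≤ u) (hyz : d y z ≤ v) :
    (d x y : ENNReal) ≤ SMPhi d u v :=
  le_iSup₂_of_le (x, y) ⟨z, hxz, hyz⟩ le_rfl

lemma SMPhi_mono {u v u' v' : NNReal} (hu : u ≤ u') (hv : v ≤ v') :
    SMPhi d u v ≤ SMPhi d u' v' :=
  iSup₂_le fun _ ⟨_, hxz, hyz⟩ => le_SMPhi d (hxz.trans hu) (hyz.trans hv)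

lemma SMPhi_comm (hsymm : ∀ x y, d x y = d y x) (u v : NNReal) :
    SMPhi d u v = SMPhi d v u := by
  have swap : ∀ u v, SMPhi d u v ≤ SMPhi d v u := fun u v =>
    iSup₂_le fun p ⟨_, hxz, hyz⟩ => by
      rw [hsymm p.1 p.2]
      exact le_SMPhi d hyz hxz
  exact (swap u v).antisymm (swap v u)

lemma dist_le_toNNReal_SMPhi (hn : SMNormal d) {x y z : X} {u v : NNReal}
    (hxz : d x z ≤ u) (hyz : d y z ≤ v) : d x y ≤ (SMPhi d u v).toNNReal :=
  ENNReal.le_toNNReal_of_coe_le (le_SMPhi d hxz hyz) (hn u v).ne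

lemma mem_SMnbhd_iff {A : Set X} {r : NNReal} {y : X} :
    y ∈ SMnbhd d A r ↔ ∃ x ∈ A, d x y < r := by
  simp [SMnbhd, SMBall]

lemma self_subset_SMnbhd (hdiag : ∀ x, d x x = 0) (A : Set X) {r : NNReal} (hr : 0 < r) :
    A ⊆ SMnbhd d A r :=
  fun x hx => (mem_SMnbhd_iff d).2 ⟨x, hx, (hdiag x).symm ▸ hr⟩

lemma SMnbhd_subset_of_SMPhi_lt (hsymm : ∀ x y, d x y = d y x) {A B C : Set X}
    {s t R : NNReal} (hAC : A ⊆ SMnbhd d C s) (hCB : C ⊆ SMnbhd d B t)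
    (hR : SMPhi d s t < R) : A ⊆ SMnbhd d B R := by
  intro a ha
  obtain ⟨c, hc, hca⟩ := (mem_SMnbhd_iff d).1 (hAC ha)
  obtain ⟨b, hb, hbc⟩ := (mem_SMnbhd_iff d).1 (hCB hc)
  have hab : (d a b : ENNReal) ≤ SMPhi d s t := le_SMPhi d (hsymm a c ▸ hca.le) hbc.le
  exact (mem_SMnbhd_iff d).2 ⟨b, hb, hsymm a b ▸ ENNReal.coe_lt_coe.1 (hab.trans_lt hR)⟩

lemma SMdHP_le {A B : Set X} {r : NNReal} (hr : 0 < r)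
    (hAB : A ⊆ SMnbhd d B r) (hBA : B ⊆ SMnbhd d A r) : SMdHP d A B ≤ r :=
  sInf_le ⟨r, rfl, hr, hAB, hBA⟩

lemma exists_of_SMdHP_lt {A B : Set X} {r : ENNReal} (h : SMdHP d A B < r) :
    ∃ s : NNReal, (s : ENNReal) < r ∧ A ⊆ SMnbhd d B s ∧ B ⊆ SMnbhd d A s := by
  obtain ⟨_, ⟨s, rfl, -, hAB, hBA⟩, hs⟩ := sInf_lt_iff.1 h
  exact ⟨s, hs, hAB, hBA⟩

lemma SMdHP_comm (A B : Set X) : SMdHP d A B = SMdHP d B A := by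
  unfold SMdHP
  congr 1
  ext
  constructor <;> exact fun ⟨r, hc, hr, h₁, h₂⟩ => ⟨r, hc, hr, h₂, h₁⟩

lemma SMdHP_self (hdiag : ∀ x, d x x = 0) (A : Set X) : SMdHP d A A = 0 :=
  le_antisymm (ENNReal.le_of_forall_pos_le_add fun ε hε _ => by
    simpa using SMdHP_le d hε (self_subset_SMnbhd d hdiag A hε)
      (self_subset_SMnbhd d hdiag A hε)) zero_le

lemma SMdHP_le_SMPhi (hsymm : ∀ x y, d x y = d y x) {A B C : Set X} {s t : NNReal}
    (hAC : A ⊆ SMnbhd d C s) (hCA : C ⊆ SMnbhd d A s)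
    (hBC : B ⊆ SMnbhd d C t) (hCB : C ⊆ SMnbhd d B t) :
    SMdHP d A B ≤ SMPhi d s t := by
  refine le_of_forall_gt_imp_ge_of_dense fun R hR => ?_
  rcases eq_or_ne R ⊤ with rfl | hR_top
  · exact le_top
  lift R to NNReal using hR_top
  have hR0 : 0 < R := ENNReal.coe_pos.1 (zero_le.trans_lt hR)
  refine SMdHP_le d hR0 (SMnbhd_subset_of_SMPhi_lt d hsymm hAC hCB hR)
    (SMnbhd_subset_of_SMPhi_lt d hsymm hBC hCA ?_)
  rwa [SMPhi_comm d hsymm]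

lemma SMdHP_le_SMPhi_add (hsymm : ∀ x y, d x y = d y x) {A B C : Set X}
    {u v ε : NNReal} (hε : 0 < ε) (hAC : SMdHP d A C ≤ u) (hBC : SMdHP d B C ≤ v) :
    SMdHP d A B ≤ SMPhi d (u + ε) (v + ε) := by
  obtain ⟨s, hs, hAC, hCA⟩ := exists_of_SMdHP_lt d
    (hAC.trans_lt (ENNReal.coe_lt_coe.2 (lt_add_of_pos_right u hε)))
  obtain ⟨t, ht, hBC, hCB⟩ := exists_of_SMdHP_lt d
    (hBC.trans_lt (ENNReal.coe_lt_coe.2 (lt_add_of_pos_right v hε)))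
  exact (SMdHP_le_SMPhi d hsymm hAC hCA hBC hCB).trans
    (SMPhi_mono d (ENNReal.coe_le_coe.1 hs.le) (ENNReal.coe_le_coe.1 ht.le))

lemma SMBounded.exists_dist_le (hsymm : ∀ x y, d x y = d y x) (hn : SMNormal d)
    {A B : Set X} (hA : SMBounded d A) (hB : SMBounded d B) :
    ∃ M : NNReal, ∀ a ∈ A, ∀ b ∈ B, d a b ≤ M := by
  obtain ⟨x₀, r₁, hA⟩ := hA
  obtain ⟨y₀, r₂, hB⟩ := hB
  refine ⟨(SMPhi d (SMPhi d r₁ (d x₀ y₀)).toNNReal r₂).toNNReal, fun a ha b hb => ?_⟩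
  have hax : d a x₀ ≤ r₁ := by rw [hsymm]; exact (hA ha).le
  have hby : d b y₀ ≤ r₂ := by rw [hsymm]; exact (hB hb).le
  have hay := dist_le_toNNReal_SMPhi d hn hax (hsymm y₀ x₀).le
  exact dist_le_toNNReal_SMPhi d hn hay hby

lemma SMdHP_lt_top_of_dist_le (hsymm : ∀ x y, d x y = d y x) {A B : Set X}
    (hA : A.Nonempty) (hB : B.Nonempty) {M : NNReal} (hM : ∀ a ∈ A, ∀ b ∈ B, d a b ≤ M) :
    SMdHP d A B < ⊤ := by
  obtain ⟨a₀, ha₀⟩ := hA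
  obtain ⟨b₀, hb₀⟩ := hB
  have hAB : A ⊆ SMnbhd d B (M + 1) := fun a ha =>
    (mem_SMnbhd_iff d).2 ⟨b₀, hb₀, hsymm a b₀ ▸ (hM a ha b₀ hb₀).trans_lt (lt_add_one M)⟩
  have hBA : B ⊆ SMnbhd d A (M + 1) := fun b hb =>
    (mem_SMnbhd_iff d).2 ⟨a₀, ha₀, (hM a₀ ha₀ b hb).trans_lt (lt_add_one M)⟩
  exact (SMdHP_le d (by positivity) hAB hBA).trans_lt ENNReal.coe_lt_top

lemma SMdHP_lt_top (hsymm : ∀ x y, d x y = d y x) (hn : SMNormal d) (A B : SMF d) :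
    SMdHP d A.1 B.1 < ⊤ :=
  have ⟨_, hM⟩ := SMBounded.exists_dist_le d hsymm hn A.2.2 B.2.2
  SMdHP_lt_top_of_dist_le d hsymm A.2.1 B.2.1 hM

lemma coe_SMdHPn (hsymm : ∀ x y, d x y = d y x) (hn : SMNormal d) (A B : SMF d) :
    (SMdHPn d A B : ENNReal) = SMdHP d A.1 B.1 :=
  ENNReal.coe_toNNReal (SMdHP_lt_top d hsymm hn A B).ne

lemma SMPhi_SMdHPn_le (hsymm : ∀ x y, d x y = d y x) (hn : SMNormal d) {u v ε : NNReal}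
    (hε : 0 < ε) : SMPhi (SMdHPn d) u v ≤ SMPhi d (u + ε) (v + ε) := by
  refine iSup₂_le fun p ⟨C, hAC, hBC⟩ => ?_
  rw [coe_SMdHPn d hsymm hn]
  refine SMdHP_le_SMPhi_add d hsymm (C := C.1) hε ?_ ?_
  · rw [← coe_SMdHPn d hsymm hn]; exact ENNReal.coe_le_coe.2 hAC
  · rw [← coe_SMdHPn d hsymm hn]; exact ENNReal.coe_le_coe.2 hBC

end SemiMetric

section Transfer

variable {X Y : Type*} {d : X → X → NNReal} {e : Y → Y → NNReal}

lemma SMNormal.of_SMPhi_le (hn : SMNormal d)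
    (h : ∀ u v ε : NNReal, 0 < ε → SMPhi e u v ≤ SMPhi d (u + ε) (v + ε)) : SMNormal e :=
  fun u v => (h u v 1 one_pos).trans_lt (hn _ _)

lemma SMRegular.of_SMPhi_le (hr : SMRegular d)
    (h : ∀ u v ε : NNReal, 0 < ε → SMPhi e u v ≤ SMPhi d (u + ε) (v + ε)) : SMRegular e := by
  intro ε hε
  obtain ⟨δ, hδ, hδε⟩ := hr ε hε
  refine ⟨δ / 2, half_pos hδ, fun u v hu hv => ?_⟩
  have hu' : u + δ / 2 ≤ δ := (add_le_add_left hu _).trans (add_halves δ).le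
  have hv' : v + δ / 2 ≤ δ := (add_le_add_left hv _).trans (add_halves δ).le
  calc SMPhi e u v ≤ SMPhi d (u + δ / 2) (v + δ / 2) := h u v _ (half_pos hδ)
    _ < ε := hδε _ _ hu' hv'

end Transfer

theorem stmt10 {X : Type*} (d : X → X → NNReal) (hd : IsSemiMetric d)
    (hn : SMNormal d) (hr : SMRegular d) :
    (∀ A B : SMF d, SMdHP d A.1 B.1 < ⊤) ∧
    (∀ A B : SMF d, SMdHPn d A B = SMdHPn d B A) ∧
    (∀ A : SMF d, SMdHPn d A A = 0) ∧
    SMNormal (SMdHPn d) ∧ SMRegular (SMdHPn d) ∧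
    ∀ (u v ε : NNReal), 0 < ε →
      SMPhi (SMdHPn d) u v ≤ SMPhi d (u + ε) (v + ε) := by
  have hΦ : ∀ u v ε : NNReal, 0 < ε → SMPhi (SMdHPn d) u v ≤ SMPhi d (u + ε) (v + ε) :=
    fun _ _ _ => SMPhi_SMdHPn_le d hd.1 hn
  refine ⟨SMdHP_lt_top d hd.1 hn, fun A B => ?_, fun A => ?_, hn.of_SMPhi_le hΦ,
    hr.of_SMPhi_le hΦ, hΦ⟩
  · rw [SMdHPn, SMdHP_comm]; rfl
  · rw [SMdHPn, SMdHP_self d fun x => (hd.2 x x).2 rfl, ENNReal.toNNReal_zero]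
end
end

section
/- Let (X,d) be a normal, regular semi-metric space. On the set of non-empty bounded closed subsets of X, the Hausdorff-Pompeiu distance d_HP is a semi-metric: d_HP(A,B) = 0 implies A = B. -/
open Filter Topology Set

noncomputable section

theorem stmt11 {X : Type*} (d : X → X → NNReal) (hd : IsSemiMetric d)
    (hn : SMNormal d) (hr : SMRegular d)
    (A B : Set X)
    (hA : A.Nonempty) (hAb : SMBounded d A) (hAc : SMClosed d A)
    (hB : B.Nonempty) (hBb : SMBounded d B) (hBc : SMClosed d B)
    (h : SMdHP d A B = 0) : A = B := by
  have key : ∀ (A B : Set X), SMClosed d B → SMdHP d A B = 0 → A ⊆ B := by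
    intro A B hBc h x hxA
    by_contra hxB
    obtain ⟨ρ, hρ, hball⟩ := hBc x hxB
    have hlt : SMdHP d A B < (ρ : ENNReal) := by
      rw [h]; exact_mod_cast hρ
    obtain ⟨c, hcS, hclt⟩ := sInf_lt_iff.mp hlt
    obtain ⟨r, rfl, hr, hAB, hBA⟩ := hcS
    have hxn : x ∈ SMnbhd d B r := hAB hxA
    obtain ⟨y, hyB, hyx⟩ := by
      simpa [SMnbhd, SMBall] using hxn
    have hrρ : r < ρ := by exact_mod_cast hclt
    have : y ∈ SMBall d x ρ := by
      simp only [SMBall, Set.mem_setOf_eq]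
      calc d x y = d y x := hd.1 x y
        _ < r := hyx
        _ < ρ := hrρ
    exact hball this hyB
  have hsymm : SMdHP d B A = 0 := by
    have : ∀ C D : Set X, SMdHP d C D = SMdHP d D C := by
      intro C D
      unfold SMdHP
      congr 1
      ext c
      constructor <;> rintro ⟨r, rfl, hr, h1, h2⟩ <;> exact ⟨r, rfl, hr, h2, h1⟩
    rw [this, h]
  exact Set.Subset.antisymm (key A B hBc h) (key B A hAc hsymm)
end
end

section
/- Let (X,d) be a complete, normal, regular semi-metric space with a graph-directed system: vertices V = {1,…,q}, finite edge sets E_{i,j}, each vertex having at least one outgoing edge, and for each edge e a right-continuous comparison function φ_e and a φ_e-contraction f_e. Define T(H₁,…,H_q) := (∪_j ∪_{e ∈ E_{i,j}} f_e(H_j))_{i=1}^q on q-tuples of non-empty subsets. If H = (H₁,…,H_q) is a tuple of non-empty bounded subsets with T(H) = H, then χ(Hᵢ) = 0 for every i, i.e., each Hᵢ is totally bounded. -/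
open Filter Topology Set

noncomputable section

/-! Let `c = max_i χ(H_i)`, finite since the `H_i` are bounded, and `g = max_e φ_e`. Covering each
`H_j` by finitely many `r`-balls (`r > c`) and pushing the cover through the maps `f_e`, the
invariance `H_i = ⋃ f_e(H_{tgt e})` gives `c ≤ g r`. Letting `r ↓ c`, right-continuity yields
`c ≤ g c`, whereas a comparison function satisfies `g t < t` for `t > 0`; so `c = 0`. -/

theorem NNReal.eq_zero_of_forall_gt_le_apply {g : NNReal → NNReal} {c : NNReal}
    (hg : ContinuousWithinAt g (Ici c) c) (hlt : ∀ t, 0 < t → g t < t)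
    (hle : ∀ r, c < r → c ≤ g r) : c = 0 := by
  have hc : c ≤ g c :=
    ge_of_tendsto (hg.mono Ioi_subset_Ici_self) (eventually_nhdsWithin_of_forall hle)
  by_contra h0
  exact (hlt c (pos_iff_ne_zero.mpr h0)).not_ge hc

section SMchi

variable {X : Type*} {d : X → X → NNReal}

theorem SMchi_le_coe_of_cover {A : Set X} {r : NNReal} (hr : 0 < r) (s : Finset X)
    (hs : A ⊆ ⋃ x ∈ s, SMBall d x r) : SMchi d A ≤ r :=
  sInf_le ⟨r, rfl, hr, s, hs⟩

theorem exists_cover_of_SMchi_lt {A : Set X} {r : NNReal} (h : SMchi d A < r) :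
    ∃ s : Finset X, A ⊆ ⋃ x ∈ s, SMBall d x r := by
  obtain ⟨_, ⟨r₀, rfl, -, s, hs⟩, hr₀⟩ := sInf_lt_iff.mp h
  have hr₀r : r₀ ≤ r := (ENNReal.coe_lt_coe.mp hr₀).le
  exact ⟨s, hs.trans <| iUnion₂_mono fun _ _ _ hy => lt_of_lt_of_le hy hr₀r⟩

theorem SMchi_le_of_forall_gt_cover {A : Set X} {b : ENNReal}
    (h : ∀ t : NNReal, b < t → ∃ s : Finset X, A ⊆ ⋃ x ∈ s, SMBall d x t) :
    SMchi d A ≤ b := by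
  refine le_of_forall_gt_imp_ge_of_dense fun a hba => ?_
  induction a using ENNReal.recTopCoe with
  | top => exact le_top
  | coe t =>
    obtain ⟨s, hs⟩ := h t hba
    exact SMchi_le_coe_of_cover (ENNReal.coe_pos.mp (pos_of_gt hba)) s hs

theorem SMchi_mono {A B : Set X} (hAB : A ⊆ B) : SMchi d A ≤ SMchi d B :=
  sInf_le_sInf fun _ ⟨r, hc, hr, s, hs⟩ => ⟨r, hc, hr, s, hAB.trans hs⟩

theorem SMchi_lt_top_of_bounded {A : Set X} (hA : SMBounded d A) : SMchi d A < ⊤ := by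
  obtain ⟨x₀, r, hA⟩ := hA
  have hcover : A ⊆ ⋃ x ∈ ({x₀} : Finset X), SMBall d x (r + 1) := by
    intro y hy
    simp only [Finset.mem_singleton, iUnion_iUnion_eq_left]
    exact lt_of_lt_of_le (show d x₀ y < r from hA hy) le_self_add
  exact (SMchi_le_coe_of_cover (by positivity) _ hcover).trans_lt ENNReal.coe_lt_top

theorem SMchi_iUnion_le {ι : Type*} [Fintype ι] {A : ι → Set X} {b : ENNReal}
    (h : ∀ i, SMchi d (A i) ≤ b) : SMchi d (⋃ i, A i) ≤ b := by
  classical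
  refine SMchi_le_of_forall_gt_cover fun t hbt => ?_
  choose s hs using fun i => exists_cover_of_SMchi_lt ((h i).trans_lt hbt)
  refine ⟨Finset.univ.biUnion s, iUnion_subset fun i => (hs i).trans ?_⟩
  exact iUnion₂_mono' fun x hx =>
    ⟨x, Finset.mem_biUnion.mpr ⟨i, Finset.mem_univ i, hx⟩, le_rfl⟩

/-- The image of a cover by `r`-balls is a cover by balls of any radius exceeding `ψ r`. -/
theorem SMchi_image_le {A : Set X} {f : X → X} {ψ : NNReal → NNReal} (hψ : Monotone ψ)
    (hf : ∀ x y, d (f x) (f y) ≤ ψ (d x y)) {r : NNReal} (hA : SMchi d A < r) :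
    SMchi d (f '' A) ≤ ψ r := by
  classical
  obtain ⟨s, hs⟩ := exists_cover_of_SMchi_lt hA
  refine SMchi_le_of_forall_gt_cover fun t ht => ⟨s.image f, ?_⟩
  rintro _ ⟨z, hz, rfl⟩
  obtain ⟨x, hx, hxz⟩ := mem_iUnion₂.mp (hs hz)
  refine mem_iUnion₂.mpr ⟨f x, Finset.mem_image_of_mem f hx, ?_⟩
  exact ((hf x z).trans (hψ (le_of_lt hxz))).trans_lt (ENNReal.coe_lt_coe.mp ht)

end SMchi

theorem stmt15_general {X : Type*} (d : X → X → NNReal)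
    {q : ℕ} (E : Type*) [Fintype E] (src tgt : E → Fin q)
    (φ : E → NNReal → NNReal) (hφ : ∀ e, SMComparison (φ e) ∧ SMRightCont (φ e))
    (f : E → X → X) (hf : ∀ e x y, d (f e x) (f e y) ≤ φ e (d x y))
    (H : Fin q → Set X) (hb : ∀ i, SMBounded d (H i))
    (hinv : ∀ i, (⋃ (e : E) (_ : src e = i), f e '' H (tgt e)) = H i) :
    ∀ i, SMchi d (H i) = 0 := by
  set g : NNReal → NNReal := fun t => Finset.univ.sup fun e => φ e t
  set c : ENNReal := Finset.univ.sup fun i => SMchi d (H i)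
  have hc_top : c ≠ ⊤ := (Finset.sup_lt_iff ENNReal.zero_lt_top).mpr
    (fun i _ => SMchi_lt_top_of_bounded (hb i)) |>.ne
  obtain ⟨c₀, hc₀⟩ : ∃ c₀ : NNReal, (c₀ : ENNReal) = c :=
    ⟨_, ENNReal.coe_toNNReal hc_top⟩
  have hchi_le : ∀ i, SMchi d (H i) ≤ c₀ := fun i => by
    rw [hc₀]; exact Finset.le_sup (f := fun i => SMchi d (H i)) (Finset.mem_univ i)
  have hstep : ∀ r : NNReal, c₀ < r → c₀ ≤ g r := by
    intro r hr
    rw [← ENNReal.coe_le_coe, hc₀]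
    refine Finset.sup_le fun i _ => ?_
    have hsub : H i ⊆ ⋃ e, f e '' H (tgt e) :=
      (hinv i).symm.subset.trans <| iUnion_mono fun _ => iUnion_subset fun _ => le_rfl
    calc SMchi d (H i) ≤ SMchi d (⋃ e, f e '' H (tgt e)) := SMchi_mono hsub
      _ ≤ g r := SMchi_iUnion_le fun e =>
          (SMchi_image_le (hφ e).1.1 (hf e)
              ((hchi_le _).trans_lt (ENNReal.coe_lt_coe.mpr hr))).trans
            (ENNReal.coe_le_coe.mpr (Finset.le_sup (f := fun e => φ e r) (Finset.mem_univ e)))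
  have hg_cont : ContinuousWithinAt g (Ici c₀) c₀ :=
    ContinuousWithinAt.finset_sup_apply fun e _ => (hφ e).2 c₀
  have hg_lt : ∀ t, 0 < t → g t < t := fun t ht =>
    (Finset.sup_lt_iff ht).mpr fun e _ => (hφ e).1.apply_lt_self ht
  have hc₀_zero : c₀ = 0 := NNReal.eq_zero_of_forall_gt_le_apply hg_cont hg_lt hstep
  exact fun i => nonpos_iff_eq_zero.mp (by simpa [hc₀_zero] using hchi_le i)

theorem stmt15 {X : Type*} (d : X → X → NNReal) (hd : IsSemiMetric d)
    (hnorm : SMNormal d) (hreg : SMRegular d) (hc : SMComplete d)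
    {q : ℕ} (E : Type*) [Fintype E] (src tgt : E → Fin q)
    (hout : ∀ i : Fin q, ∃ e : E, src e = i)
    (φ : E → NNReal → NNReal) (hφ : ∀ e, SMComparison (φ e) ∧ SMRightCont (φ e))
    (f : E → X → X) (hf : ∀ e x y, d (f e x) (f e y) ≤ φ e (d x y))
    (H : Fin q → Set X) (hne : ∀ i, (H i).Nonempty) (hb : ∀ i, SMBounded d (H i))
    (hinv : ∀ i, (⋃ (e : E) (_ : src e = i), f e '' H (tgt e)) = H i) :
    ∀ i, SMchi d (H i) = 0 :=
  stmt15_general d E src tgt φ hφ f hf H hb hinv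
end
end

section
/- Let Ψ be a semi-metric transformer (Ψ(0)=0, increasing, positive on (0,∞), continuous at 0) with generalized inverse Ψ⁽⁻¹⁾(u) := inf{t ≥ 0 : Ψ(t) > u}. If d is a complete semi-metric on X, then Ψ ∘ d is a complete semi-metric on X. Moreover, if d is regular (basic triangle function continuous at (0,0)), then Ψ ∘ d is regular, using the bound Φ_{Ψ∘d}(u,v) ≤ Ψ(Φ_d(Ψ⁽⁻¹⁾(u), Ψ⁽⁻¹⁾(v))) for u, v below lim_{t→∞} Ψ(t). -/
open Filter Topology Set

noncomputable section

theorem stmt18 {X : Type*} (d : X → X → NNReal) (hd : IsSemiMetric d)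
    (Ψ : NNReal → NNReal) (h0 : Ψ 0 = 0) (hm : Monotone Ψ)
    (hp : ∀ t : NNReal, 0 < t → 0 < Ψ t) (hcont : ContinuousAt Ψ 0) :
    IsSemiMetric (fun x y => Ψ (d x y)) ∧
    (SMComplete d → SMComplete (fun x y => Ψ (d x y))) ∧
    (SMRegular d → SMRegular (fun x y => Ψ (d x y))) := by
  have hΨ0 : Tendsto Ψ (𝓝 0) (𝓝 0) := by
    have := hcont; rwa [ContinuousAt, h0] at this
  refine ⟨⟨fun x y => by simp only []; rw [hd.1], fun x y => ?_⟩, ?_, ?_⟩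
  · simp only []
    constructor
    · intro h
      by_contra hne
      have hpos : 0 < d x y :=
        pos_iff_ne_zero.mpr fun h0' => hne ((hd.2 x y).mp h0')
      exact absurd h (ne_of_gt (hp _ hpos))
    · intro h; rw [(hd.2 x y).mpr h, h0]
  · intro hcomp x hx
    have hx' : SMCauchy d x := by
      intro ε hε
      obtain ⟨N, hN⟩ := hx (Ψ ε) (hp ε hε)
      refine ⟨N, fun m hm' n hn' => ?_⟩
      by_contra hlt
      exact absurd (hN m hm' n hn') (not_lt.mpr (hm (le_of_not_gt hlt)))
    obtain ⟨l, hl⟩ := hcomp x hx'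
    exact ⟨l, hΨ0.comp hl⟩
  · intro hreg ε hε
    have hhalf : 0 < ε / 2 := by positivity
    have hpre : Ψ ⁻¹' Set.Iio (ε / 2) ∈ 𝓝 (0 : NNReal) := hΨ0 (gt_mem_nhds hhalf)
    obtain ⟨η, hη, hηs⟩ := NNReal.nhds_zero_basis.mem_iff.mp hpre
    obtain ⟨δ', hδ', hΦ⟩ := hreg η hη
    refine ⟨Ψ δ' / 2, half_pos (hp δ' hδ'), fun u v hu hv => ?_⟩
    have key : SMPhi (fun x y => Ψ (d x y)) u v ≤ ((ε / 2 : NNReal) : ENNReal) := by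
      refine iSup₂_le fun p hp' => ?_
      obtain ⟨z, h1, h2⟩ := hp'
      have hd1 : d p.1 z ≤ δ' := by
        by_contra hgt
        have : Ψ δ' ≤ Ψ (d p.1 z) := hm (le_of_lt (lt_of_not_ge hgt))
        have : Ψ δ' ≤ Ψ δ' / 2 := le_trans (this.trans h1) hu
        exact absurd this (not_le.mpr (NNReal.half_lt_self (ne_of_gt (hp δ' hδ'))))
      have hd2 : d p.2 z ≤ δ' := by
        by_contra hgt
        have : Ψ δ' ≤ Ψ (d p.2 z) := hm (le_of_lt (lt_of_not_ge hgt))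
        have : Ψ δ' ≤ Ψ δ' / 2 := le_trans (this.trans h2) hv
        exact absurd this (not_le.mpr (NNReal.half_lt_self (ne_of_gt (hp δ' hδ'))))
      have hle : ((d p.1 p.2 : NNReal) : ENNReal) ≤ SMPhi d δ' δ' :=
        le_iSup₂_of_le p ⟨z, hd1, hd2⟩ le_rfl
      have hlt : (d p.1 p.2 : ENNReal) < (η : ENNReal) :=
        hle.trans_lt (hΦ δ' δ' le_rfl le_rfl)
      have hlt' : d p.1 p.2 < η := ENNReal.coe_lt_coe.mp hlt
      exact ENNReal.coe_le_coe.mpr (le_of_lt (hηs hlt'))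
    exact key.trans_lt (ENNReal.coe_lt_coe.mpr (NNReal.half_lt_self (ne_of_gt hε)))
end
end

section
/- Let {f_{i,j}}_{i,j∈{1,2}} and {g_{i,j}}_{i,j∈{1,2}} be two compatible families on [0,1] with a common comparison function φ: each h_{i,j} is strictly increasing, satisfies |h_{i,j}(x) − h_{i,j}(y)| ≤ φ(|x−y|), and h_{i,1}(0) = 0, h_{i,1}(1) = h_{i,2}(0), h_{i,2}(1) = 1 for i = 1,2. Then there exists a pair of continuous increasing functions φ₁, φ₂ : [0,1] → [0,1] with φᵢ(0)=0, φᵢ(1)=1 solving the system g_{i,j} ∘ φ_j = φ_i ∘ f_{i,j} for all i,j ∈ {1,2}. -/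
open Filter Topology Set

noncomputable section

/-! The pair `(φ₁, φ₂)` is the fixed point of the operator
`T(p)_i = g_{i,j} ∘ p_j ∘ f_{i,j}⁻¹` on `f_{i,j}([0,1])`, acting on pairs of increasing continuous
self-maps of `[0,1]` fixing `0` and `1`. The compatibility conditions make both branches agree at
`f_{i,1}(1) = f_{i,2}(0)`, so `T(p)_i` is again such a map, and `T` is a `φ`-contraction for the
uniform distance. This space is complete and has diameter `≤ 1`, so `d(Tⁿp, Tⁿq) ≤ φⁿ(1) → 0`: the
iterates converge, and the limit is fixed because `φ(t) ≤ t` makes `T` continuous.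

The inverse branches are `x ↦ sup {t | f_{i,j}(t) ≤ x}`, monotone maps of `[0,1]` onto `[0,1]` and
hence continuous. -/

open Function unitInterval

theorem nndist_iterate_le_iterate {X : Type*} [PseudoMetricSpace X] {φ : NNReal → NNReal}
    (hφ : Monotone φ) {T : X → X} (hT : ∀ x y, nndist (T x) (T y) ≤ φ (nndist x y)) (n : ℕ)
    (x y : X) : nndist (T^[n] x) (T^[n] y) ≤ φ^[n] (nndist x y) := by
  induction n with
  | zero => exact le_rfl
  | succ n ih =>
    rw [iterate_succ_apply', iterate_succ_apply', iterate_succ_apply']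
    exact (hT _ _).trans (hφ ih)

namespace SMComparison

variable {φ : NNReal → NNReal}

theorem apply_le (hφ : SMComparison φ) (t : NNReal) : φ t ≤ t := by
  by_contra! h
  have hpos : 0 < φ t := zero_le.trans_lt h
  have hle : ∀ n, φ t ≤ φ^[n] (φ t) := fun n =>
    hφ.1.monotone_iterate_of_le_map (hφ.1 h.le) (Nat.zero_le n)
  exact hpos.not_ge (ge_of_tendsto' (hφ.2 _ hpos) hle)

theorem tendsto_iterate (hφ : SMComparison φ) (t : NNReal) :
    Tendsto (fun n => φ^[n] t) atTop (𝓝 0) := by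
  rcases eq_zero_or_pos t with rfl | ht
  · simp only [iterate_fixed (nonpos_iff_eq_zero.1 (hφ.apply_le 0))]
    exact tendsto_const_nhds
  · exact hφ.2 t ht

theorem lipschitzWith_one {X Y : Type*} [PseudoMetricSpace X] [PseudoMetricSpace Y]
    (hφ : SMComparison φ) {T : X → Y} (hT : ∀ x y, nndist (T x) (T y) ≤ φ (nndist x y)) :
    LipschitzWith 1 T :=
  LipschitzWith.of_dist_le_mul fun x y => by
    rw [NNReal.coe_one, one_mul, dist_nndist, dist_nndist]
    exact_mod_cast (hT x y).trans (hφ.apply_le _)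

/-- A bounded version of Matkowski's fixed point theorem. -/
theorem exists_isFixedPt {X : Type*} [MetricSpace X] [CompleteSpace X] [Nonempty X]
    (hφ : SMComparison φ) {T : X → X} (hT : ∀ x y, nndist (T x) (T y) ≤ φ (nndist x y))
    {D : NNReal} (hD : ∀ x y : X, nndist x y ≤ D) : ∃ x, IsFixedPt T x := by
  obtain ⟨x₀⟩ := ‹Nonempty X›
  have hLip := hφ.lipschitzWith_one hT
  have hCauchy : CauchySeq fun n => T^[n] x₀ := by
    refine Metric.cauchySeq_iff'.2 fun ε hε => ?_
    obtain ⟨N, hN⟩ :=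
      ((NNReal.tendsto_coe.2 (hφ.tendsto_iterate D)).eventually (gt_mem_nhds hε)).exists
    refine ⟨N, fun n hn => ?_⟩
    obtain ⟨k, rfl⟩ := Nat.exists_eq_add_of_le hn
    calc dist (T^[N + k] x₀) (T^[N] x₀) = nndist (T^[N] (T^[k] x₀)) (T^[N] x₀) := by
          rw [iterate_add_apply, coe_nndist]
      _ ≤ φ^[N] D := NNReal.coe_le_coe.2 <|
          (nndist_iterate_le_iterate hφ.1 hT N _ _).trans (hφ.1.iterate N (hD _ _))
      _ < ε := hN
  obtain ⟨x, hx⟩ := cauchySeq_tendsto_of_complete hCauchy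
  exact ⟨x, isFixedPt_of_tendsto_iterate hx hLip.continuous.continuousAt⟩

end SMComparison

section SupInv

variable {α β : Type*} [CompleteLinearOrder α] [Preorder β] {F : α → β}

def supInv (F : α → β) (y : β) : α := sSup {x | F x ≤ y}

theorem monotone_supInv : Monotone (supInv F) := fun _ _ hy =>
  sSup_le_sSup fun _ hx => le_trans hx hy

theorem leftInverse_supInv (hF : StrictMono F) : LeftInverse (supInv F) F := fun x => by
  simp only [supInv, hF.le_iff_le, Iic_def, csSup_Iic]

end SupInv

theorem continuous_supInv {α β : Type*} [CompleteLinearOrder α] [TopologicalSpace α]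
    [OrderTopology α] [DenselyOrdered α] [LinearOrder β] [TopologicalSpace β] [OrderTopology β]
    {F : α → β} (hF : StrictMono F) : Continuous (supInv F) :=
  monotone_supInv.continuous_of_surjective (leftInverse_supInv hF).surjective

theorem supInv_one {F : I → I} : supInv F 1 = 1 :=
  le_antisymm le_one' (le_sSup (show F 1 ≤ 1 from le_one'))

theorem supInv_zero {F : I → I} (hF : StrictMono F) : supInv F 0 = 0 :=
  le_antisymm ((monotone_supInv (nonneg' : 0 ≤ F 0)).trans_eq (leftInverse_supInv hF 0)) nonneg'

def IsCompatible {α : Type*} [Zero α] [One α] (h : Fin 2 → Fin 2 → α → α) : Prop :=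
  ∀ i, h i 0 0 = 0 ∧ h i 0 1 = h i 1 0 ∧ h i 1 1 = 1

theorem IsCompatible.restrict {h : Fin 2 → Fin 2 → ℝ → ℝ} (hc : IsCompatible h)
    (hmaps : ∀ i j, MapsTo (h i j) I I) : IsCompatible fun i j => (hmaps i j).restrict :=
  fun i => ⟨Subtype.ext (hc i).1, Subtype.ext (hc i).2.1, Subtype.ext (hc i).2.2⟩

section ConjOp

variable {F G : Fin 2 → Fin 2 → I → I} {p q : Fin 2 → I → I} {i : Fin 2} {x : I}

def conjOp (F G : Fin 2 → Fin 2 → I → I) (p : Fin 2 → I → I) (i : Fin 2) (x : I) : I :=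
  if x ≤ F i 0 1 then G i 0 (p 0 (supInv (F i 0) x)) else G i 1 (p 1 (supInv (F i 1) x))

theorem conjOp_of_le (hx : x ≤ F i 0 1) :
    conjOp F G p i x = G i 0 (p 0 (supInv (F i 0) x)) :=
  if_pos hx

theorem conjOp_branches_eq (hF : ∀ j, StrictMono (F i j)) (hFc : F i 0 1 = F i 1 0)
    (hGc : G i 0 1 = G i 1 0) (hp : p 0 1 = 1 ∧ p 1 0 = 0) :
    G i 0 (p 0 (supInv (F i 0) (F i 0 1))) = G i 1 (p 1 (supInv (F i 1) (F i 0 1))) := by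
  rw [leftInverse_supInv (hF 0), hFc, leftInverse_supInv (hF 1), hp.1, hp.2, hGc]

theorem conjOp_of_ge (hF : ∀ j, StrictMono (F i j)) (hFc : F i 0 1 = F i 1 0)
    (hGc : G i 0 1 = G i 1 0) (hp : p 0 1 = 1 ∧ p 1 0 = 0) (hx : F i 0 1 ≤ x) :
    conjOp F G p i x = G i 1 (p 1 (supInv (F i 1) x)) := by
  rcases hx.eq_or_lt with rfl | hx
  · exact (conjOp_of_le le_rfl).trans (conjOp_branches_eq hF hFc hGc hp)
  · exact if_neg hx.not_ge

theorem conjOp_apply_apply (hF : ∀ j, StrictMono (F i j)) (hFc : F i 0 1 = F i 1 0)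
    (hGc : G i 0 1 = G i 1 0) (hp : p 0 1 = 1 ∧ p 1 0 = 0) (j : Fin 2) (t : I) :
    conjOp F G p i (F i j t) = G i j (p j t) := by
  match j with
  | 0 => rw [conjOp_of_le ((hF 0).monotone le_one'), leftInverse_supInv (hF 0)]
  | 1 => rw [conjOp_of_ge hF hFc hGc hp (hFc ▸ (hF 1).monotone nonneg'), leftInverse_supInv (hF 1)]

theorem continuous_conjOp (hF : ∀ j, StrictMono (F i j)) (hFc : F i 0 1 = F i 1 0)
    (hG : ∀ j, Continuous (G i j)) (hGc : G i 0 1 = G i 1 0) (hp : ∀ j, Continuous (p j))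
    (hp' : p 0 1 = 1 ∧ p 1 0 = 0) : Continuous (conjOp F G p i) :=
  Continuous.if_le ((hG 0).comp ((hp 0).comp (continuous_supInv (hF 0))))
    ((hG 1).comp ((hp 1).comp (continuous_supInv (hF 1)))) continuous_id continuous_const
    fun _ hx => hx ▸ conjOp_branches_eq hF hFc hGc hp'

theorem monotone_conjOp (hF : StrictMono (F i 1)) (hG : ∀ j, Monotone (G i j))
    (hGc : G i 0 1 = G i 1 0) (hp : ∀ j, Monotone (p j)) (hp' : p 0 1 = 1 ∧ p 1 0 = 0) :
    Monotone (conjOp F G p i) := by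
  have hb : ∀ j, Monotone fun x => G i j (p j (supInv (F i j) x)) := fun j =>
    (hG j).comp ((hp j).comp monotone_supInv)
  have hcross : ∀ x y, G i 0 (p 0 (supInv (F i 0) x)) ≤ G i 1 (p 1 (supInv (F i 1) y)) := by
    intro x y
    calc G i 0 (p 0 (supInv (F i 0) x)) ≤ G i 0 (p 0 (supInv (F i 0) 1)) := hb 0 le_one'
      _ = G i 1 (p 1 (supInv (F i 1) 0)) := by
        rw [supInv_one, supInv_zero hF]
        exact hp'.1.symm ▸ hp'.2.symm ▸ hGc
      _ ≤ G i 1 (p 1 (supInv (F i 1) y)) := hb 1 nonneg'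
  intro x y hxy
  unfold conjOp
  split_ifs with hx hy hy
  · exact hb 0 hxy
  · exact hcross x y
  · exact absurd (hxy.trans hy) hx
  · exact hb 1 hxy

theorem conjOp_zero (hF : StrictMono (F i 0)) (hGc : G i 0 0 = 0) (hp : p 0 0 = 0) :
    conjOp F G p i 0 = 0 := by
  rw [conjOp_of_le nonneg', supInv_zero hF]
  exact hp.symm ▸ hGc

theorem conjOp_one (hF : ∀ j, StrictMono (F i j)) (hFc : F i 0 1 = F i 1 0)
    (hGc : G i 0 1 = G i 1 0) (hGc' : G i 1 1 = 1) (hp : p 0 1 = 1 ∧ p 1 0 = 0) (hp1 : p 1 1 = 1) :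
    conjOp F G p i 1 = 1 := by
  rw [conjOp_of_ge hF hFc hGc hp le_one', supInv_one]
  exact hp1.symm ▸ hGc'

theorem nndist_conjOp_le {φ : NNReal → NNReal} (hφ : Monotone φ)
    (hG : ∀ j x y, nndist (G i j x) (G i j y) ≤ φ (nndist x y)) {D : NNReal}
    (hpq : ∀ j y, nndist (p j y) (q j y) ≤ D) :
    nndist (conjOp F G p i x) (conjOp F G q i x) ≤ φ D := by
  unfold conjOp
  split_ifs <;> exact (hG _ _ _).trans (hφ (hpq _ _))

end ConjOp

def normalizedPairs : Set (Fin 2 → C(I, I)) :=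
  {p | ∀ i, Monotone (p i) ∧ p i 0 = 0 ∧ p i 1 = 1}

theorem isClosed_normalizedPairs : IsClosed normalizedPairs := by
  simp only [normalizedPairs, Monotone, ofPred_forall, ofPred_and]
  refine isClosed_iInter fun i => (isClosed_iInter fun x => isClosed_iInter fun y =>
    isClosed_iInter fun _ => isClosed_le ?_ ?_).inter ((isClosed_eq ?_ ?_).inter
      (isClosed_eq ?_ ?_)) <;> fun_prop

theorem nndist_pi_continuousMap_le_iff {ι α β : Type*} [Fintype ι] [TopologicalSpace α]
    [CompactSpace α] [PseudoMetricSpace β] {p q : ι → C(α, β)} {r : NNReal} :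
    nndist p q ≤ r ↔ ∀ i x, nndist (p i x) (q i x) ≤ r := by
  refine nndist_pi_le_iff.trans (forall_congr' fun i => ?_)
  rw [← NNReal.coe_le_coe, coe_nndist]
  exact (ContinuousMap.dist_le r.2).trans
    (forall_congr' fun x => by rw [← coe_nndist]; exact NNReal.coe_le_coe)

theorem nndist_le_one (p q : Fin 2 → C(I, I)) : nndist p q ≤ 1 :=
  nndist_pi_continuousMap_le_iff.2 fun i x => NNReal.coe_le_coe.1 <|
    Real.dist_le_of_mem_Icc_01 (p i x).2 (q i x).2

section Normalized

variable {F G : Fin 2 → Fin 2 → I → I}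

def conjOpNormalized (hF : ∀ i j, StrictMono (F i j)) (hFc : IsCompatible F)
    (hGmono : ∀ i j, Monotone (G i j)) (hGcont : ∀ i j, Continuous (G i j))
    (hGc : IsCompatible G) (p : normalizedPairs) : normalizedPairs :=
  have hp : (p.1 0 : I → I) 1 = 1 ∧ (p.1 1 : I → I) 0 = 0 := ⟨(p.2 0).2.2, (p.2 1).2.1⟩
  ⟨fun i => ⟨conjOp F G (fun j => p.1 j) i, continuous_conjOp (hF i) (hFc i).2.1 (hGcont i)
      (hGc i).2.1 (fun j => (p.1 j).continuous) hp⟩,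
    fun i => ⟨monotone_conjOp (hF i 1) (hGmono i) (hGc i).2.1 (fun j => (p.2 j).1) hp,
      conjOp_zero (p := fun j => p.1 j) (hF i 0) (hGc i).1 (p.2 0).2.1,
      conjOp_one (p := fun j => p.1 j) (hF i) (hFc i).2.1 (hGc i).2.1 (hGc i).2.2 hp
        (p.2 1).2.2⟩⟩

theorem conjOpNormalized_apply (hF : ∀ i j, StrictMono (F i j)) (hFc : IsCompatible F)
    (hGmono : ∀ i j, Monotone (G i j)) (hGcont : ∀ i j, Continuous (G i j))
    (hGc : IsCompatible G) (p : normalizedPairs) (i : Fin 2) (x : I) :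
    (conjOpNormalized hF hFc hGmono hGcont hGc p).1 i x = conjOp F G (fun j => p.1 j) i x :=
  rfl

theorem exists_conjugacy {φ : NNReal → NNReal} (hφ : SMComparison φ)
    (hF : ∀ i j, StrictMono (F i j)) (hFc : IsCompatible F) (hGmono : ∀ i j, Monotone (G i j))
    (hG : ∀ i j x y, nndist (G i j x) (G i j y) ≤ φ (nndist x y)) (hGc : IsCompatible G) :
    ∃ p ∈ normalizedPairs, ∀ i j t, G i j (p j t) = p i (F i j t) := by
  have : CompleteSpace normalizedPairs := isClosed_normalizedPairs.completeSpace_coe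
  have : Nonempty normalizedPairs :=
    ⟨⟨fun _ => ContinuousMap.id I, fun _ => ⟨monotone_id, rfl, rfl⟩⟩⟩
  let T := conjOpNormalized hF hFc hGmono
    (fun i j => (hφ.lipschitzWith_one (hG i j)).continuous) hGc
  have hT : ∀ p q, nndist (T p) (T q) ≤ φ (nndist p q) := fun p q =>
    nndist_pi_continuousMap_le_iff.2 fun i x => by
      simpa only [T, conjOpNormalized_apply, Subtype.nndist_eq] using
        nndist_conjOp_le hφ.1 (hG i) (nndist_pi_continuousMap_le_iff.1 le_rfl)
  obtain ⟨p, hp⟩ := hφ.exists_isFixedPt hT fun p q => nndist_le_one p q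
  refine ⟨p.1, p.2, fun i j t => ?_⟩
  calc G i j (p.1 j t) = conjOp F G (fun j => p.1 j) i (F i j t) :=
        (conjOp_apply_apply (p := fun j => p.1 j) (hF i) (hFc i).2.1 (hGc i).2.1
          ⟨(p.2 0).2.2, (p.2 1).2.1⟩ j t).symm
    _ = p.1 i (F i j t) := congrArg (fun q : normalizedPairs => q.1 i (F i j t)) hp

end Normalized

theorem stmt19 (φ : NNReal → NNReal) (hφ : SMComparison φ)
    (f g : Fin 2 → Fin 2 → ℝ → ℝ)
    (hf : ∀ i j, StrictMonoOn (f i j) (Set.Icc 0 1) ∧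
      Set.MapsTo (f i j) (Set.Icc 0 1) (Set.Icc 0 1) ∧
      ∀ x ∈ Set.Icc (0:ℝ) 1, ∀ y ∈ Set.Icc (0:ℝ) 1,
        nndist (f i j x) (f i j y) ≤ φ (nndist x y))
    (hg : ∀ i j, StrictMonoOn (g i j) (Set.Icc 0 1) ∧
      Set.MapsTo (g i j) (Set.Icc 0 1) (Set.Icc 0 1) ∧
      ∀ x ∈ Set.Icc (0:ℝ) 1, ∀ y ∈ Set.Icc (0:ℝ) 1,
        nndist (g i j x) (g i j y) ≤ φ (nndist x y))
    (hfc : ∀ i : Fin 2, f i 0 0 = 0 ∧ f i 0 1 = f i 1 0 ∧ f i 1 1 = 1)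
    (hgc : ∀ i : Fin 2, g i 0 0 = 0 ∧ g i 0 1 = g i 1 0 ∧ g i 1 1 = 1) :
    ∃ p : Fin 2 → ℝ → ℝ,
      (∀ i, ContinuousOn (p i) (Set.Icc 0 1) ∧ MonotoneOn (p i) (Set.Icc 0 1) ∧
        Set.MapsTo (p i) (Set.Icc 0 1) (Set.Icc 0 1) ∧ p i 0 = 0 ∧ p i 1 = 1) ∧
      ∀ i j, ∀ x ∈ Set.Icc (0:ℝ) 1, g i j (p j x) = p i (f i j x) := by
  obtain ⟨p, hp, hconj⟩ := exists_conjugacy hφ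
    (F := fun i j => (hf i j).2.1.restrict) (G := fun i j => (hg i j).2.1.restrict)
    (fun i j _ _ hxy => (hf i j).1 (Subtype.prop _) (Subtype.prop _) hxy)
    (IsCompatible.restrict hfc fun i j => (hf i j).2.1)
    (fun i j _ _ hxy => (hg i j).1.monotoneOn (Subtype.prop _) (Subtype.prop _) hxy)
    (fun i j x y => (hg i j).2.2 x x.2 y y.2) (IsCompatible.restrict hgc fun i j => (hg i j).2.1)
  refine ⟨fun i => IccExtend zero_le_one fun x => (p i x : ℝ), fun i => ⟨?_, ?_, ?_, ?_, ?_⟩,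
    fun i j x hx => ?_⟩
  · exact (continuous_IccExtend_iff.2 (continuous_subtype_val.comp (p i).continuous)).continuousOn
  · exact (Monotone.IccExtend zero_le_one fun _ _ hxy => (hp i).1 hxy).monotoneOn _
  · exact fun _ _ => Subtype.prop _
  · exact (IccExtend_left _ _).trans (congrArg Subtype.val (hp i).2.1)
  · exact (IccExtend_right _ _).trans (congrArg Subtype.val (hp i).2.2)
  · beta_reduce
    rw [IccExtend_of_mem _ _ hx, IccExtend_of_mem _ _ ((hf i j).2.1 hx)]
    exact congrArg Subtype.val (hconj i j ⟨x, hx⟩)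
end
end
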